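/- Let Ω ⊂ ℂ be a nonempty bounded open set, let k : Ω → ℝ be continuous with k > 0 everywhere on Ω, and let μ : closure(Ω) → ℂ be continuous and twice continuously differentiable on Ω, satisfying Δμ = k·μ on Ω (with Δ applied to real and imaginary parts separately). Then the supremum of |μ| over closure(Ω) equals the supremum of |μ| over the boundary ∂Ω; in particular |μ(z)| ≤ sup_{w ∈ ∂Ω} |μ(w)| for all z ∈ closure(Ω). -/

import Mathlib

/-!
If `|μ|` has a local maximum at an interior point `z`, then along every line `t ↦ μ (z + t v)` the
function `|μ|²` has a local maximum at `t = 0`, so its second derivative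
`2 ⟪μ, ∂ᵥ²μ⟫ + 2 |∂ᵥμ|²` is nonpositive there. Summing over `v = 1, i` gives
`k |μ z|² = ⟪μ z, Δμ z⟫ ≤ 0`, hence `μ z = 0`. So the maximum of `|μ|` over the compact set
`closure Ω` is either attained on `frontier Ω` or is `0`, and in both cases it is attained on the
(nonempty) frontier.
-/

/-- Directional derivative of `f : ℂ → E` at `z` in the direction `v ∈ ℂ`. -/
noncomputable def dirDeriv {E : Type*} [NormedAddCommGroup E] [NormedSpace ℝ E]
    (v : ℂ) (f : ℂ → E) (z : ℂ) : E :=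
  deriv (fun t : ℝ => f (z + t • v)) 0

/-- The flat Laplacian `Δf = ∂²f/∂x² + ∂²f/∂y²` of a function on `ℂ ≅ ℝ²`
(applied componentwise when the target is `ℂ`). -/
noncomputable def flatLaplacian {E : Type*} [NormedAddCommGroup E] [NormedSpace ℝ E]
    (f : ℂ → E) (z : ℂ) : E :=
  dirDeriv 1 (dirDeriv 1 f) z + dirDeriv Complex.I (dirDeriv Complex.I f) z

open Set Filter Topology

theorem IsLocalMax.deriv_deriv_nonpos {f : ℝ → ℝ} {a : ℝ} (hmax : IsLocalMax f a)
    (hc : ContinuousAt f a) : deriv (deriv f) a ≤ 0 := by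
  by_contra! hpos
  have hconst : f =ᶠ[𝓝 a] fun _ => f a :=
    (isLocalMin_of_deriv_deriv_pos hpos hmax.deriv_eq_zero hc).and hmax |>.mono
      fun _ h => le_antisymm h.2 h.1
  have hderiv : deriv f =ᶠ[𝓝 a] fun _ => 0 := by
    simpa only [deriv_const'] using hconst.deriv
  exact hpos.ne' (by simp [hderiv.deriv_eq])

section NormedSpace

variable {E : Type*} [NormedAddCommGroup E] [NormedSpace ℝ E]

theorem ContDiffAt.differentiableAt_deriv {ψ : ℝ → E} {a : ℝ} (hψ : ContDiffAt ℝ 2 ψ a) :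
    DifferentiableAt ℝ (deriv ψ) a :=
  ((hψ.fderiv_right (m := 1) le_rfl).clm_apply contDiffAt_const).differentiableAt one_ne_zero

theorem dirDeriv_add_smul (v : ℂ) (f : ℂ → E) (z : ℂ) (t : ℝ) :
    dirDeriv v f (z + t • v) = deriv (fun s : ℝ => f (z + s • v)) t := by
  have h : (fun s : ℝ => f (z + t • v + s • v)) = fun s => f (z + (s + t) • v) := by
    funext s; congr 1; module
  rw [dirDeriv, h]
  exact (deriv_comp_add_const (fun s : ℝ => f (z + s • v)) t 0).trans (by rw [zero_add])

theorem dirDeriv_dirDeriv (v : ℂ) (f : ℂ → E) (z : ℂ) :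
    dirDeriv v (dirDeriv v f) z = deriv (deriv fun t : ℝ => f (z + t • v)) 0 := by
  rw [dirDeriv]
  congr 1
  funext t
  exact dirDeriv_add_smul v f z t

end NormedSpace

section InnerProductSpace

open RealInnerProductSpace

variable {E : Type*} [NormedAddCommGroup E] [InnerProductSpace ℝ E]

theorem IsLocalMax.inner_deriv_deriv_nonpos {ψ : ℝ → E} {a : ℝ} (hψ : ContDiffAt ℝ 2 ψ a)
    (hmax : IsLocalMax (‖ψ ·‖) a) : ⟪ψ a, deriv (deriv ψ) a⟫ ≤ 0 := by
  have hsq : IsLocalMax (‖ψ ·‖ ^ 2) a :=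
    hmax.mono fun t ht => pow_le_pow_left₀ (norm_nonneg _) ht 2
  have hderiv : deriv (‖ψ ·‖ ^ 2) =ᶠ[𝓝 a] fun t => 2 * ⟪ψ t, deriv ψ t⟫ := by
    filter_upwards [hψ.eventually (by simp)] with t ht
    exact (ht.differentiableAt two_ne_zero).hasDerivAt.norm_sq.deriv
  have h2 : HasDerivAt (fun t => 2 * ⟪ψ t, deriv ψ t⟫)
      (2 * (⟪ψ a, deriv (deriv ψ) a⟫ + ⟪deriv ψ a, deriv ψ a⟫)) a :=
    ((hψ.differentiableAt two_ne_zero).hasDerivAt.inner ℝ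
      hψ.differentiableAt_deriv.hasDerivAt).const_mul 2
  have hle := hsq.deriv_deriv_nonpos (hψ.continuousAt.norm.pow 2)
  rw [hderiv.deriv_eq, h2.deriv, real_inner_self_eq_norm_sq] at hle
  nlinarith [sq_nonneg ‖deriv ψ a‖]

theorem IsLocalMax.inner_flatLaplacian_nonpos {μ : ℂ → E} {z : ℂ} (hμ : ContDiffAt ℝ 2 μ z)
    (hmax : IsLocalMax (‖μ ·‖) z) : ⟪μ z, flatLaplacian μ z⟫ ≤ 0 := by
  have hline : ∀ v : ℂ, ⟪μ z, dirDeriv v (dirDeriv v μ) z⟫ ≤ 0 := by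
    intro v
    have hL : ContDiff ℝ 2 fun t : ℝ => z + t • v := by fun_prop
    have h0 : z + (0 : ℝ) • v = z := by simp
    rw [← h0] at hμ hmax
    simpa [dirDeriv_dirDeriv, Function.comp_def] using IsLocalMax.inner_deriv_deriv_nonpos
      (hμ.comp 0 hL.contDiffAt)
      (hmax.comp_continuous (g := fun t : ℝ => z + t • v) hL.continuous.continuousAt)
  rw [flatLaplacian, inner_add_right]
  linarith [hline 1, hline Complex.I]

theorem IsLocalMax.eq_zero_of_flatLaplacian_eq_smul {μ : ℂ → E} {z : ℂ} {c : ℝ}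
    (hμ : ContDiffAt ℝ 2 μ z) (hc : 0 < c) (hΔ : flatLaplacian μ z = c • μ z)
    (hmax : IsLocalMax (‖μ ·‖) z) :
    μ z = 0 := by
  have h := hmax.inner_flatLaplacian_nonpos hμ
  rw [hΔ, real_inner_smul_right, real_inner_self_eq_norm_sq] at h
  have hsq : ‖μ z‖ ^ 2 ≤ 0 := nonpos_of_mul_nonpos_right h hc
  simpa using hsq

end InnerProductSpace

theorem exists_mem_frontier_isMaxOn_norm_of_isLocalMax_imp_eq_zero {X E : Type*}
    [NormedAddCommGroup X] [NormedSpace ℝ X] [Nontrivial X] [ProperSpace X]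
    [NormedAddCommGroup E] {f : X → E} {U : Set X} (hU : IsOpen U)
    (hb : Bornology.IsBounded U) (hne : U.Nonempty) (hf : ContinuousOn f (closure U))
    (hzero : ∀ z ∈ U, IsLocalMax (‖f ·‖) z → f z = 0) :
    ∃ w ∈ frontier U, IsMaxOn (‖f ·‖) (closure U) w := by
  obtain ⟨x, hx, hmax⟩ := hb.isCompact_closure.exists_isMaxOn hne.closure hf.norm
  rw [closure_eq_self_union_frontier] at hx
  rcases hx with hxU | hxU
  · have hfront : (frontier U).Nonempty :=
      nonempty_frontier_iff.mpr ⟨hne, fun h => NormedSpace.unbounded_univ ℝ X (h ▸ hb)⟩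
    obtain ⟨w, hw⟩ := hfront
    have hfx : f x = 0 :=
      hzero x hxU (hmax.isLocalMax (mem_of_superset (hU.mem_nhds hxU) subset_closure))
    refine ⟨w, hw, fun y hy => ?_⟩
    calc ‖f y‖ ≤ ‖f x‖ := hmax hy
      _ = 0 := by rw [hfx, norm_zero]
      _ ≤ ‖f w‖ := norm_nonneg _
  · exact ⟨x, hxU, hmax⟩

theorem IsMaxOn.biSup_eq {α : Type*} {f : α → ℝ} {s : Set α} {a : α} (ha : a ∈ s)
    (hmax : IsMaxOn f s a) (h0 : 0 ≤ f a) : ⨆ x ∈ s, f x = f a := by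
  have hbdd : BddAbove (range fun x : s => f x) :=
    ⟨f a, forall_mem_range.mpr fun x => hmax x.2⟩
  rw [← ciSup_subtype_fun hbdd (by rwa [Real.sSup_empty, hmax.iSup_eq ha]), hmax.iSup_eq ha]

theorem statement12_general (Ω : Set ℂ) (hne : Ω.Nonempty) (hΩopen : IsOpen Ω)
    (hΩbdd : Bornology.IsBounded Ω)
    (k : ℂ → ℝ) (hk_pos : ∀ z ∈ Ω, 0 < k z)
    (μ : ℂ → ℂ) (hμ_cont : ContinuousOn μ (closure Ω)) (hμ_C2 : ContDiffOn ℝ 2 μ Ω)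
    (hμ_eq : ∀ z ∈ Ω, flatLaplacian μ z = (k z : ℂ) * μ z) :
    (⨆ z ∈ closure Ω, ‖μ z‖) = (⨆ z ∈ frontier Ω, ‖μ z‖) ∧
    ∀ z ∈ closure Ω, ‖μ z‖ ≤ ⨆ y ∈ frontier Ω, ‖μ y‖ := by
  obtain ⟨w, hw, hmax⟩ := exists_mem_frontier_isMaxOn_norm_of_isLocalMax_imp_eq_zero hΩopen
    hΩbdd hne hμ_cont fun z hz hloc => hloc.eq_zero_of_flatLaplacian_eq_smul
      (hμ_C2.contDiffAt (hΩopen.mem_nhds hz)) (hk_pos z hz)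
      (by rw [hμ_eq z hz, Complex.real_smul])
  have hsup_closure := hmax.biSup_eq (frontier_subset_closure hw) (norm_nonneg _)
  have hsup_frontier := (hmax.on_subset frontier_subset_closure).biSup_eq hw (norm_nonneg _)
  exact ⟨hsup_closure.trans hsup_frontier.symm, fun z hz => hsup_frontier ▸ hmax hz⟩

/-- maximum principle for the homogeneous equation `Δμ = kμ`: if
`Ω ⊂ ℂ` is nonempty, bounded and open, `k > 0` continuous on `Ω`, and `μ` is continuous
on `closure Ω`, `C²` on `Ω`, with `Δμ = kμ` on `Ω`, then `sup_{closure Ω} |μ| = sup_{∂Ω} |μ|`;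
in particular `|μ| ≤ sup_{∂Ω} |μ|` on `closure Ω`. -/
theorem statement12 (Ω : Set ℂ) (hne : Ω.Nonempty) (hΩopen : IsOpen Ω)
    (hΩbdd : Bornology.IsBounded Ω)
    (k : ℂ → ℝ) (hk_cont : ContinuousOn k Ω) (hk_pos : ∀ z ∈ Ω, 0 < k z)
    (μ : ℂ → ℂ) (hμ_cont : ContinuousOn μ (closure Ω)) (hμ_C2 : ContDiffOn ℝ 2 μ Ω)
    (hμ_eq : ∀ z ∈ Ω, flatLaplacian μ z = (k z : ℂ) * μ z) :
    (⨆ z ∈ closure Ω, ‖μ z‖) = (⨆ z ∈ frontier Ω, ‖μ z‖) ∧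
    ∀ z ∈ closure Ω, ‖μ z‖ ≤ ⨆ y ∈ frontier Ω, ‖μ y‖ :=
  statement12_general Ω hne hΩopen hΩbdd k hk_pos μ hμ_cont hμ_C2 hμ_eq
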